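/- Let T ≥ 1, G > 0, ε_T ≥ 0, and let C ≥ 1 satisfy the Rademacher quadratic anticoncentration property for horizon T. Let a_1,…,a_T be a one-dimensional online algorithm over T rounds which guarantees that for every loss sequence g_1,…,g_T ∈ ℝ with |g_t| ≤ G for all t, its regret against the zero comparator satisfies ∑_{t=1}^T g_t·a_t(g_1,…,g_{t−1}) ≤ G·ε_T. Let A ∈ ℝ^{T×T} be symmetric positive definite and set B := A − Diag(A), with B ≠ 0. Then for every real q with 1 ≤ q ≤ ‖B‖_F/(C·√(2·max_{1≤i≤T} ∑_{j=1}^T B_{ij}²)), there exists a loss sequence g_1,…,g_T ∈ {−G, G} such that (g_1,…,g_T)ᵀ A (g_1,…,g_T) ≥ G²·(Tr(A) + q‖B‖_F) and ∑_{t=1}^T g_t·a_t(g_1,…,g_{t−1}) ≥ G·ε_T·(1 − 2^{4C²q²}). -/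

import Mathlib

open Matrix Finset

/-- The Frobenius norm `‖B‖_F := √(∑_{i,j} B_{ij}²)`. -/
noncomputable def frobNorm {T : ℕ} (B : Matrix (Fin T) (Fin T) ℝ) : ℝ :=
  Real.sqrt (∑ i : Fin T, ∑ j : Fin T, (B i j)^2)

/-- The sign vector associated with `ε : Fin T → Bool`. -/
def signVec {T : ℕ} (ε : Fin T → Bool) : Fin T → ℝ :=
  fun i => if ε i then 1 else -1

/-- `C ≥ 1` satisfies the **Rademacher quadratic anticoncentration property**
for horizon `T`: for every nonzero symmetric `B ∈ ℝ^{T×T}` with zero diagonal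
and every `1 ≤ q ≤ ‖B‖_F/(C√(2·max_i ∑_j B_{ij}²))`, independent uniform signs
`Y ∈ {−1,1}^T` satisfy `Pr(∑_{i,j} Y_iY_jB_{ij} ≥ q‖B‖_F) ≥ 2^{−4C²q²}`
(probability computed by uniform counting over `{−1,1}^T`). -/
noncomputable def RademacherAnticoncentration (T : ℕ) (C : ℝ) : Prop :=
  ∀ B : Matrix (Fin T) (Fin T) ℝ, B ≠ 0 → B.IsSymm → (∀ i, B i i = 0) →
    ∀ q : ℝ, 1 ≤ q →
      q ≤ frobNorm B /
            (C * Real.sqrt (2 * ⨆ i : Fin T, ∑ j : Fin T, (B i j)^2)) →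
      (2 : ℝ) ^ (-(4 * C^2 * q^2)) ≤
        ((Finset.univ.filter (fun ε : Fin T → Bool =>
            q * frobNorm B ≤
              ∑ i : Fin T, ∑ j : Fin T, signVec ε i * signVec ε j * B i j)).card : ℝ)
          / 2^T

/-!
Play `g = G • Y` for uniformly random signs `Y`. By causality `a_t(g)` does not depend on `Y_t`, so
each reward `g_t · a_t(g)` has mean zero, and the total reward averages to zero over all `2^T` sign
patterns while never exceeding `G ε_T`. Since `gᵀ A g = G² (Tr A + Yᵀ B Y)`, anticoncentration gives
an event of probability at least `2^{-4C²q²}` on which the quadratic bound holds, and on that event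
the best sign pattern must recover at least `G ε_T (1 - 2^{4C²q²})` of reward.
-/

lemma signVec_mul_self {T : ℕ} (ε : Fin T → Bool) (i : Fin T) : signVec ε i * signVec ε i = 1 := by
  unfold signVec; cases ε i <;> norm_num

lemma abs_signVec {T : ℕ} (ε : Fin T → Bool) (i : Fin T) : |signVec ε i| = 1 := by
  unfold signVec; cases ε i <;> norm_num

lemma signVec_update_self {T : ℕ} (ε : Fin T → Bool) (t : Fin T) (b : Bool) :
    signVec (Function.update ε t b) t = if b then 1 else -1 := by
  simp [signVec]

lemma signVec_update_of_ne {T : ℕ} (ε : Fin T → Bool) {s t : Fin T} (h : s ≠ t) (b : Bool) :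
    signVec (Function.update ε t b) s = signVec ε s := by
  simp [signVec, Function.update_of_ne h]

lemma smul_signVec_eq_or_eq_neg {T : ℕ} (G : ℝ) (ε : Fin T → Bool) (t : Fin T) :
    (G • signVec ε) t = G ∨ (G • signVec ε) t = -G := by
  simp only [Pi.smul_apply, smul_eq_mul, signVec]
  cases ε t <;> simp

lemma abs_smul_signVec_le {T : ℕ} {G : ℝ} (hG : 0 ≤ G) (ε : Fin T → Bool) (t : Fin T) :
    |(G • signVec ε) t| ≤ G := by
  rw [Pi.smul_apply, smul_eq_mul, abs_mul, abs_signVec, abs_of_nonneg hG, mul_one]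

lemma signVec_dotProduct_mulVec {T : ℕ} (A : Matrix (Fin T) (Fin T) ℝ) (ε : Fin T → Bool) :
    signVec ε ⬝ᵥ (A *ᵥ signVec ε) = A.trace +
      ∑ i : Fin T, ∑ j : Fin T,
        signVec ε i * signVec ε j * (A - Matrix.diagonal (fun i => A i i)) i j := by
  have hdiag : ∀ i, ∑ j : Fin T, signVec ε i * signVec ε j * Matrix.diagonal (fun i => A i i) i j
      = A i i := fun i => by
    simp [Matrix.diagonal_apply, signVec_mul_self]
  simp only [Matrix.sub_apply, mul_sub, Finset.sum_sub_distrib, hdiag, dotProduct, mulVec,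
    Finset.mul_sum, Matrix.trace, Matrix.diag]
  rw [add_sub_cancel]
  exact Finset.sum_congr rfl fun i _ => Finset.sum_congr rfl fun j _ => by ring

lemma smul_signVec_dotProduct_mulVec {T : ℕ} (A : Matrix (Fin T) (Fin T) ℝ) (G : ℝ)
    (ε : Fin T → Bool) :
    (G • signVec ε) ⬝ᵥ (A *ᵥ (G • signVec ε)) = G ^ 2 * (A.trace +
      ∑ i : Fin T, ∑ j : Fin T,
        signVec ε i * signVec ε j * (A - Matrix.diagonal (fun i => A i i)) i j) := by
  rw [Matrix.mulVec_smul, dotProduct_smul, smul_dotProduct, signVec_dotProduct_mulVec,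
    smul_eq_mul, smul_eq_mul, ← mul_assoc, sq]

lemma sum_signVec_mul_eq_zero {T : ℕ} (t : Fin T) (F : (Fin T → Bool) → ℝ)
    (hF : ∀ ε, F (Function.update ε t (!ε t)) = F ε) :
    ∑ ε, signVec ε t * F ε = 0 := by
  let flip : (Fin T → Bool) → (Fin T → Bool) := fun ε => Function.update ε t (!ε t)
  have hflip : Function.Involutive flip := fun ε => by
    funext s
    by_cases h : s = t
    · subst h; simp [flip]
    · simp [flip, Function.update_of_ne h]
  have hneg : ∀ ε, signVec (flip ε) t * F (flip ε) = -(signVec ε t * F ε) := fun ε => by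
    rw [hF, signVec_update_self]
    unfold signVec
    cases ε t <;> simp
  have hself := Equiv.sum_comp hflip.toPerm (fun ε => signVec ε t * F ε)
  simp only [Function.Involutive.coe_toPerm, hneg, Finset.sum_neg_distrib] at hself
  linarith

lemma sum_sum_smul_signVec_mul_eq_zero {T : ℕ} (alg : Fin T → (Fin T → ℝ) → ℝ)
    (hcausal : ∀ (t : Fin T) (g g' : Fin T → ℝ),
      (∀ s : Fin T, s < t → g s = g' s) → alg t g = alg t g') (G : ℝ) :
    ∑ ε : Fin T → Bool, ∑ t : Fin T, (G • signVec ε) t * alg t (G • signVec ε) = 0 := by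
  rw [Finset.sum_comm]
  refine Finset.sum_eq_zero fun t _ => ?_
  have hF : ∀ ε : Fin T → Bool,
      alg t (G • signVec (Function.update ε t (!ε t))) = alg t (G • signVec ε) := fun ε =>
    hcausal t _ _ fun s hs => by simp [signVec_update_of_ne ε hs.ne]
  simp only [Pi.smul_apply, smul_eq_mul, mul_assoc, ← Finset.mul_sum,
    sum_signVec_mul_eq_zero t (fun ε => alg t (G • signVec ε)) hF, mul_zero]

lemma exists_mem_le_of_sum_eq_zero {ι : Type*} [Fintype ι] [Nonempty ι] (S : ι → ℝ) (M r : ℝ)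
    (hsum : ∑ i, S i = 0) (hle : ∀ i, S i ≤ M) (E : Finset ι)
    (hE : (Fintype.card ι : ℝ) ≤ r * #E) : ∃ i ∈ E, M * (1 - r) ≤ S i := by
  classical
  have hcard : (0 : ℝ) < Fintype.card ι := by exact_mod_cast Fintype.card_pos
  have hM : 0 ≤ M := by
    have : (0 : ℝ) ≤ Fintype.card ι * M := by
      simpa [hsum] using Finset.sum_le_sum fun i (_ : i ∈ Finset.univ) => hle i
    exact nonneg_of_mul_nonneg_right (by linarith) hcard
  have hEpos : (0 : ℝ) < #E := by
    rcases (Nat.cast_nonneg (α := ℝ) #E).eq_or_lt with h | h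
    · rw [← h, mul_zero] at hE
      linarith
    · exact h
  obtain ⟨i, hiE, hmax⟩ := E.exists_max_image S (Finset.card_pos.1 (by exact_mod_cast hEpos))
  refine ⟨i, hiE, le_of_mul_le_mul_left ?_ hEpos⟩
  have hin : ∑ j ∈ E, S j ≤ #E * S i := by
    simpa using Finset.sum_le_sum hmax
  have hout : ∑ j ∈ Finset.univ \ E, S j ≤ (Fintype.card ι - #E) * M := by
    have := Finset.sum_le_sum fun j (_ : j ∈ Finset.univ \ E) => hle j
    rwa [Finset.sum_const, Finset.card_univ_sdiff, nsmul_eq_mul,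
      Nat.cast_sub (Finset.card_le_univ E)] at this
  have hsplit := Finset.sum_sdiff (Finset.subset_univ E) (f := S)
  rw [hsum] at hsplit
  nlinarith [mul_le_mul_of_nonneg_left hE hM]

theorem wealth_lower_bound_general (T : ℕ)
    (G εT C : ℝ) (hG : 0 < G)
    (hanti : RademacherAnticoncentration T C)
    (alg : Fin T → (Fin T → ℝ) → ℝ)
    (hcausal : ∀ (t : Fin T) (g g' : Fin T → ℝ),
      (∀ s : Fin T, s < t → g s = g' s) → alg t g = alg t g')
    (hregret : ∀ g : Fin T → ℝ, (∀ t, |g t| ≤ G) →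
      ∑ t : Fin T, g t * alg t g ≤ G * εT)
    (A : Matrix (Fin T) (Fin T) ℝ) (hA : A.PosDef)
    (B : Matrix (Fin T) (Fin T) ℝ)
    (hB : B = A - Matrix.diagonal (fun i => A i i)) (hBne : B ≠ 0) :
    ∀ q : ℝ, 1 ≤ q →
      q ≤ frobNorm B /
            (C * Real.sqrt (2 * ⨆ i : Fin T, ∑ j : Fin T, (B i j)^2)) →
      ∃ g : Fin T → ℝ, (∀ t, g t = G ∨ g t = -G) ∧
        G^2 * (A.trace + q * frobNorm B) ≤ g ⬝ᵥ (A *ᵥ g) ∧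
        G * εT * (1 - (2 : ℝ) ^ (4 * C^2 * q^2)) ≤
          ∑ t : Fin T, g t * alg t g := by
  intro q hq1 hq2
  have hBsymm : B.IsSymm :=
    hB ▸ (isHermitian_iff_isSymm.1 hA.isHermitian).sub (isSymm_diagonal _)
  have hBdiag : ∀ i, B i i = 0 := by simp [hB]
  set E := Finset.univ.filter (fun ε : Fin T → Bool =>
    q * frobNorm B ≤ ∑ i : Fin T, ∑ j : Fin T, signVec ε i * signVec ε j * B i j)
  have hE : (Fintype.card (Fin T → Bool) : ℝ) ≤ (2 : ℝ) ^ (4 * C ^ 2 * q ^ 2) * #E := by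
    have h := hanti B hBne hBsymm hBdiag q hq1 hq2
    rw [Real.rpow_neg zero_le_two, inv_eq_one_div,
      div_le_div_iff₀ (by positivity) (by positivity), one_mul] at h
    rw [Fintype.card_fun, Fintype.card_bool, Fintype.card_fin, Nat.cast_pow, Nat.cast_ofNat]
    linarith
  obtain ⟨ε, hεE, hwealth⟩ := exists_mem_le_of_sum_eq_zero _ (G * εT) _
    (sum_sum_smul_signVec_mul_eq_zero alg hcausal G)
    (fun ε => hregret _ (abs_smul_signVec_le hG.le ε)) E hE
  refine ⟨G • signVec ε, smul_signVec_eq_or_eq_neg G ε, ?_, hwealth⟩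
  rw [smul_signVec_dotProduct_mulVec, ← hB]
  gcongr
  exact (Finset.mem_filter.1 hεE).2

/-- **Wealth lower bound (key lemma).**
Let `alg` be a one-dimensional online algorithm over `T` rounds (`alg t g`
plays round `t` using only `g_s`, `s < t`) with regret against the zero
comparator at most `G·ε_T` on all loss sequences bounded by `G`. For a
symmetric positive definite `A` with `B := A − Diag(A) ≠ 0`, and for every
`1 ≤ q ≤ ‖B‖_F/(C√(2·max_i ∑_j B_{ij}²))`, there is a loss sequence
`g ∈ {−G,G}^T` with `gᵀAg ≥ G²(Tr(A) + q‖B‖_F)` and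
`∑_t g_t·alg t g ≥ G·ε_T·(1 − 2^{4C²q²})`. -/
theorem wealth_lower_bound (T : ℕ) (hT : 1 ≤ T)
    (G εT C : ℝ) (hG : 0 < G) (hε : 0 ≤ εT) (hC : 1 ≤ C)
    (hanti : RademacherAnticoncentration T C)
    (alg : Fin T → (Fin T → ℝ) → ℝ)
    (hcausal : ∀ (t : Fin T) (g g' : Fin T → ℝ),
      (∀ s : Fin T, s < t → g s = g' s) → alg t g = alg t g')
    (hregret : ∀ g : Fin T → ℝ, (∀ t, |g t| ≤ G) →
      ∑ t : Fin T, g t * alg t g ≤ G * εT)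
    (A : Matrix (Fin T) (Fin T) ℝ) (hA : A.PosDef)
    (B : Matrix (Fin T) (Fin T) ℝ)
    (hB : B = A - Matrix.diagonal (fun i => A i i)) (hBne : B ≠ 0) :
    ∀ q : ℝ, 1 ≤ q →
      q ≤ frobNorm B /
            (C * Real.sqrt (2 * ⨆ i : Fin T, ∑ j : Fin T, (B i j)^2)) →
      ∃ g : Fin T → ℝ, (∀ t, g t = G ∨ g t = -G) ∧
        G^2 * (A.trace + q * frobNorm B) ≤ g ⬝ᵥ (A *ᵥ g) ∧
        G * εT * (1 - (2 : ℝ) ^ (4 * C^2 * q^2)) ≤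
          ∑ t : Fin T, g t * alg t g :=
  wealth_lower_bound_general T G εT C hG hanti alg hcausal hregret A hA B hB hBne
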